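/- Let Y be a nonempty subset of a metric space X and f : Y → L^∞(V) a Lipschitz map. For the extension F_x(v) = inf_{y∈Y}(f_y(v) + dil(f,y)·d(x,y)) and any x ∈ X, y ∈ Y, one has ‖F(y) − F(x)‖_∞ ≤ dil(f,y)·d(x,y). -/

import Mathlib

open scoped ENNReal NNReal

/-!
The infimum defining `F` is taken coordinatewise, so everything reduces to a real-valued
function `φ` on `Y` with `|φ y - φ y'| ≤ D y · d(y, y')` for nonnegative weights `D`.
Then `φ y - φ y' ≤ min (D y) (D y') · d(y, y') ≤ D y · d(x, y) + D y' · d(x, y')`, so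
`φ y - D y · d(x, y)` is a lower bound for the infimum, while the term at `y` is an upper
bound for it. Hence the infimum lies within `D y · d(x, y)` of `φ y`, which at `x = y` says
that it extends `φ`, and in general is the claimed estimate.
-/

/-- The pointwise dilatation `dil(g, a) = sup_{a' ≠ a} d(g a, g a') / d(a, a')`. -/
noncomputable def ptDil {A E : Type*} [MetricSpace A] [MetricSpace E]
    (g : A → E) (a : A) : ℝ :=
  sSup {r : ℝ | ∃ a' : A, a' ≠ a ∧ r = dist (g a) (g a') / dist a a'}

section PtDil

variable {A E : Type*} [MetricSpace A] [MetricSpace E]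

theorem ptDil_nonneg (g : A → E) (a : A) : 0 ≤ ptDil g a :=
  Real.sSup_nonneg <| by
    rintro r ⟨a', -, rfl⟩
    positivity

theorem LipschitzWith.dist_le_ptDil_mul {L : ℝ≥0} {g : A → E} (hg : LipschitzWith L g)
    (a a' : A) : dist (g a) (g a') ≤ ptDil g a * dist a a' := by
  rcases eq_or_ne a' a with rfl | hne
  · simp
  have hd : 0 < dist a a' := dist_pos.2 hne.symm
  have hbdd : BddAbove {r : ℝ | ∃ a' : A, a' ≠ a ∧ r = dist (g a) (g a') / dist a a'} := by
    refine ⟨L, ?_⟩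
    rintro r ⟨b, hb, rfl⟩
    exact div_le_of_le_mul₀ dist_nonneg L.coe_nonneg (hg.dist_le_mul a b)
  rw [← div_le_iff₀ hd]
  exact le_csSup hbdd ⟨a', hne, rfl⟩

end PtDil

section McShane

variable {X : Type*} [MetricSpace X] {Y : Set X}

noncomputable def mcShaneInf (φ D : Y → ℝ) (x : X) : ℝ :=
  ⨅ y : Y, (φ y + D y * dist x y)

variable {φ D : Y → ℝ}

theorem sub_le_mul_dist_add_mul_dist (hD : ∀ y, 0 ≤ D y)
    (hφ : ∀ y y', |φ y - φ y'| ≤ D y * dist y y') (x : X) (y y' : Y) :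
    φ y - φ y' ≤ D y * dist x y + D y' * dist x y' := by
  have htri : dist (y : X) y' ≤ dist x y + dist x y' := dist_triangle_left _ _ _
  have h₁ : φ y - φ y' ≤ D y * dist (y : X) y' := (le_abs_self _).trans (hφ y y')
  have h₂ : φ y - φ y' ≤ D y' * dist (y : X) y' := by
    rw [dist_comm]
    exact (le_abs_self _).trans ((abs_sub_comm _ _).trans_le (hφ y' y))
  rcases le_total (D y) (D y') with h | h
  · nlinarith [hD y, dist_nonneg (x := x) (y := y')]
  · nlinarith [hD y', dist_nonneg (x := x) (y := y)]

theorem sub_mul_dist_le_mcShaneInf (hD : ∀ y, 0 ≤ D y)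
    (hφ : ∀ y y', |φ y - φ y'| ≤ D y * dist y y') (x : X) (y : Y) :
    φ y - D y * dist x y ≤ mcShaneInf φ D x := by
  have : Nonempty Y := ⟨y⟩
  exact le_ciInf fun y' => by linarith [sub_le_mul_dist_add_mul_dist hD hφ x y y']

theorem mcShaneInf_le_add_mul_dist (hD : ∀ y, 0 ≤ D y)
    (hφ : ∀ y y', |φ y - φ y'| ≤ D y * dist y y') (x : X) (y : Y) :
    mcShaneInf φ D x ≤ φ y + D y * dist x y := by
  refine ciInf_le ⟨φ y - D y * dist x y, ?_⟩ y
  rintro _ ⟨y', rfl⟩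
  linarith [sub_le_mul_dist_add_mul_dist hD hφ x y y']

theorem abs_mcShaneInf_sub_le (hD : ∀ y, 0 ≤ D y)
    (hφ : ∀ y y', |φ y - φ y'| ≤ D y * dist y y') (x : X) (y : Y) :
    |mcShaneInf φ D x - φ y| ≤ D y * dist x y :=
  abs_sub_le_iff.2 ⟨by linarith [mcShaneInf_le_add_mul_dist hD hφ x y],
    by linarith [sub_mul_dist_le_mcShaneInf hD hφ x y]⟩

theorem mcShaneInf_coe (hD : ∀ y, 0 ≤ D y)
    (hφ : ∀ y y', |φ y - φ y'| ≤ D y * dist y y') (y : Y) :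
    mcShaneInf φ D y = φ y := by
  simpa [sub_eq_zero] using abs_mcShaneInf_sub_le hD hφ y y

end McShane

theorem lp.abs_apply_sub_le_dist {V : Type*} (f g : lp (fun _ : V => ℝ) ∞) (v : V) :
    |f v - g v| ≤ dist f g := by
  simpa [Real.dist_eq] using (lp.lipschitzWith_one_eval ∞ v).dist_le_mul f g

theorem lp.dist_le_of_forall_abs_sub_le {V : Type*} {f g : lp (fun _ : V => ℝ) ∞} {C : ℝ}
    (hC : 0 ≤ C) (h : ∀ v, |f v - g v| ≤ C) : dist f g ≤ C := by
  rw [dist_eq_norm]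
  exact lp.norm_le_of_forall_le hC fun v => by simpa using h v

section McShaneLp

variable {X V : Type*} [MetricSpace X] {Y : Set X} {D : Y → ℝ}
  {f : Y → lp (fun _ : V => ℝ) ∞}

theorem abs_apply_sub_le_of_dist_le (hf : ∀ y y', dist (f y) (f y') ≤ D y * dist y y')
    (v : V) (y y' : Y) : |f y v - f y' v| ≤ D y * dist y y' :=
  (lp.abs_apply_sub_le_dist _ _ v).trans (hf y y')

theorem memℓp_mcShaneInf (hD : ∀ y, 0 ≤ D y)
    (hf : ∀ y y', dist (f y) (f y') ≤ D y * dist y y') (y₀ : Y) (x : X) :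
    Memℓp (fun v => mcShaneInf (fun y => f y v) D x) ∞ := by
  refine memℓp_infty ⟨‖f y₀‖ + D y₀ * dist x y₀, ?_⟩
  rintro _ ⟨v, rfl⟩
  have hclose := abs_mcShaneInf_sub_le hD (abs_apply_sub_le_of_dist_le hf v) x y₀
  have hv : |f y₀ v| ≤ ‖f y₀‖ := lp.norm_apply_le_norm ENNReal.top_ne_zero (f y₀) v
  change |mcShaneInf (fun y => f y v) D x| ≤ _
  linarith [abs_sub_abs_le_abs_sub (mcShaneInf (fun y => f y v) D x) (f y₀ v)]

end McShaneLp

/-- For the McShane-Gromov extension `F` of a Lipschitz map `f : Y → L^∞(V)` and any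
`x ∈ X`, `y ∈ Y`, one has `‖F(y) − F(x)‖_∞ ≤ dil(f,y)·d(x,y)`. -/
theorem stmt_4 {X V : Type*} [MetricSpace X] (Y : Set X) (hY : Y.Nonempty)
    (f : Y → lp (fun _ : V => ℝ) ∞) (L : ℝ≥0) (hf : LipschitzWith L f) :
    ∃ F : X → lp (fun _ : V => ℝ) ∞,
      (∀ (x : X) (v : V), (F x : ∀ _ : V, ℝ) v
          = ⨅ y : Y, ((f y : ∀ _ : V, ℝ) v + ptDil f y * dist x (y : X))) ∧
      (∀ (x : X) (y : Y), dist (F (y : X)) (F x) ≤ ptDil f y * dist x (y : X)) := by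
  obtain ⟨y₀, hy₀⟩ := hY
  have hD : ∀ y, 0 ≤ ptDil f y := ptDil_nonneg f
  have hdist : ∀ y y', dist (f y) (f y') ≤ ptDil f y * dist y y' := hf.dist_le_ptDil_mul
  refine ⟨fun x => ⟨_, memℓp_mcShaneInf hD hdist ⟨y₀, hy₀⟩ x⟩, fun _ _ => rfl, fun x y => ?_⟩
  refine lp.dist_le_of_forall_abs_sub_le (mul_nonneg (hD y) dist_nonneg) fun v => ?_
  have hcoord := abs_apply_sub_le_of_dist_le hdist v
  change |mcShaneInf (fun y => f y v) _ y - mcShaneInf (fun y => f y v) _ x| ≤ _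
  rw [mcShaneInf_coe hD hcoord, abs_sub_comm]
  exact abs_mcShaneInf_sub_le hD hcoord x y
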